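/- In any improvement cycle of the PPA-Game, if at step s player j deviates to resource k, then the utility obtained after the deviation is at most μ_k w_{j,k} / (Q_k + w_{j,k}), where Q_k is the minimal total weight on resource k over all profiles in the cycle. -/
import Mathlib


open Finset

/-- Total weight on resource `k` under profile `π`. -/
noncomputable def Wt {N K : ℕ} (w : Fin N → Fin K → ℝ) (π : Fin N → Fin K) (k : Fin K) : ℝ :=
  ∑ j : Fin N, if π j = k then w j k else 0

/-- Utility of player `j` in the PPA-Game. -/
noncomputable def U {N K : ℕ} (μ : Fin K → ℝ) (w : Fin N → Fin K → ℝ)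
    (π : Fin N → Fin K) (j : Fin N) : ℝ :=
  if 0 < Wt w π (π j) then μ (π j) * w j (π j) / Wt w π (π j) else 0

/-- Pure Nash equilibrium of the PPA-Game. -/
def IsPNE {N K : ℕ} (μ : Fin K → ℝ) (w : Fin N → Fin K → ℝ) (π : Fin N → Fin K) : Prop :=
  ∀ j : Fin N, ∀ k' : Fin K, U μ w (Function.update π j k') j ≤ U μ w π j


lemma Wt_nonneg {N K : ℕ} (w : Fin N → Fin K → ℝ) (hw : ∀ j k, 0 ≤ w j k ∧ w j k ≤ 1)
    (π : Fin N → Fin K) (k : Fin K) : 0 ≤ Wt w π k := by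
  apply Finset.sum_nonneg
  intro i _
  split
  · exact (hw i k).1
  · exact le_rfl

lemma Wt_update {N K : ℕ} (w : Fin N → Fin K → ℝ) (π : Fin N → Fin K) (j : Fin N) (k : Fin K)
    (h : π j ≠ k) : Wt w (Function.update π j k) k = Wt w π k + w j k := by
  unfold Wt
  have key : ∀ i : Fin N, (if Function.update π j k i = k then w i k else 0)
      = (if π i = k then w i k else 0) + (if i = j then w j k else 0) := by
    intro i
    by_cases hij : i = j
    · subst hij; simp [Function.update_self, h]
    · simp [Function.update_of_ne hij, hij]
  simp_rw [key, Finset.sum_add_distrib, Finset.sum_ite_eq' Finset.univ j (fun _ => w j k),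
    Finset.mem_univ, if_pos]

/-- in an improvement cycle, if at step `s` player `j` deviates to resource
`k`, then the post-deviation utility is at most `μ k * w j k / (Q + w j k)`, where `Q` is
the minimal total weight on `k` along the cycle. -/
theorem stmt7 {N K : ℕ} (hN : 2 ≤ N) (hK : 2 ≤ K)
    (μ : Fin K → ℝ) (w : Fin N → Fin K → ℝ)
    (hμ : ∀ k, 0 < μ k ∧ μ k ≤ 1) (hw : ∀ j k, 0 ≤ w j k ∧ w j k ≤ 1)
    (t : ℕ) (ht : 1 ≤ t) (ℓ : ℕ → (Fin N → Fin K))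
    (hcycle : ℓ t = ℓ 0)
    (hsteps : ∀ s < t, ∃ (j : Fin N) (k' : Fin K),
      ℓ (s + 1) = Function.update (ℓ s) j k' ∧ U μ w (ℓ (s + 1)) j > U μ w (ℓ s) j)
    (s : ℕ) (hs : s < t) (j : Fin N) (k : Fin K)
    (hdev : ℓ (s + 1) = Function.update (ℓ s) j k)
    (himp : U μ w (ℓ (s + 1)) j > U μ w (ℓ s) j)
    (Q : ℝ)
    (hQle : ∀ s' ≤ t, Q ≤ Wt w (ℓ s') k)
    (hQmem : ∃ s' ≤ t, Wt w (ℓ s') k = Q) :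
    U μ w (ℓ (s + 1)) j ≤ μ k * w j k / (Q + w j k) := by
  have hne : ℓ s j ≠ k := by
    intro h
    have : Function.update (ℓ s) j k = ℓ s := by rw [← h]; exact Function.update_eq_self j (ℓ s)
    rw [hdev, this] at himp
    exact lt_irrefl _ himp
  have hWeq : Wt w (ℓ (s+1)) k = Wt w (ℓ s) k + w j k := by
    rw [hdev]; exact Wt_update w (ℓ s) j k hne
  have hQ0 : 0 ≤ Q := by
    obtain ⟨s', _, hs'⟩ := hQmem
    rw [← hs']; exact Wt_nonneg w hw (ℓ s') k
  have hQs : Q ≤ Wt w (ℓ s) k := hQle s (le_of_lt hs)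
  have hjk : ℓ (s+1) j = k := by rw [hdev]; exact Function.update_self j k (ℓ s)
  have hw0 := (hw j k).1
  have hμ0 := (hμ k).1
  unfold U
  rw [hjk]
  split_ifs with h
  · by_cases hwz : w j k = 0
    · simp [hwz]
    · have hwpos : 0 < w j k := lt_of_le_of_ne hw0 (Ne.symm hwz)
      have hden : 0 < Q + w j k := by linarith
      have hle : Q + w j k ≤ Wt w (ℓ (s+1)) k := by rw [hWeq]; linarith
      exact div_le_div_of_nonneg_left (mul_nonneg hμ0.le hw0) hden hle
  · exact div_nonneg (mul_nonneg hμ0.le hw0) (by linarith)
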